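/- arXiv:1601.00241 — 2 statements merged into one kernel-verified Lean document; each statement's English description precedes it below -/
import Mathlib

section
/- Let f be a holomorphic function on an open neighborhood of the closed disk Δ(0,2) = {ζ ∈ ℂ : |ζ| ≤ 2} and let k ≥ 0 be an integer. Then ∫_{Δ(0,2)} |f(ζ)|² dm(ζ) ≤ ((k+1)/2^{2k}) ∫_{Δ(0,2)} |ζ|^{2k} |f(ζ)|² dm(ζ). -/
/-!
Write `f = ∑ aₙ ζⁿ`, the partial sums converging uniformly on the closed disk. In polar coordinates
the monomials are orthogonal on the disk for every radial weight, so
`∫_{|ζ| ≤ R} |ζ|^w |f|² = ∑ |aₙ|² · 2π R^{2n+w+2} / (2n+w+2)`. The inequality then holds term by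
term, because `2n + 2k + 2 ≤ (k + 1)(2n + 2)`.
-/

open MeasureTheory Metric Set Real Filter Topology ComplexConjugate

theorem TendstoUniformlyOn.tendsto_setIntegral_mul_norm_sq {X E : Type*} [TopologicalSpace X]
    [T2Space X] [MeasurableSpace X] [OpensMeasurableSpace X] [NormedAddCommGroup E]
    {μ : Measure X} [IsFiniteMeasureOnCompacts μ] {K : Set X} (hK : IsCompact K)
    {g : X → ℝ} (hg : ContinuousOn g K) {F : ℕ → X → E} {f : X → E}
    (hF : ∀ n, ContinuousOn (F n) K) (h : TendstoUniformlyOn F f atTop K) :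
    Tendsto (fun n ↦ ∫ x in K, g x * ‖F n x‖ ^ 2 ∂μ) atTop
      (𝓝 (∫ x in K, g x * ‖f x‖ ^ 2 ∂μ)) := by
  obtain ⟨C, hC⟩ := hK.exists_bound_of_continuousOn (h.continuousOn (.of_forall hF))
  obtain ⟨G, hG⟩ := hK.exists_bound_of_continuousOn hg
  have hFC : ∀ᶠ n in atTop, ∀ x ∈ K, ‖F n x‖ ≤ C + 1 := by
    filter_upwards [Metric.tendstoUniformlyOn_iff.1 h 1 one_pos] with n hn x hx
    have := norm_sub_norm_le (F n x) (f x)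
    rw [← dist_eq_norm, dist_comm] at this
    linarith [hC x hx, hn x hx]
  refine tendsto_integral_filter_of_dominated_convergence (fun _ ↦ G * (C + 1) ^ 2)
    (.of_forall fun n ↦ (hg.mul ((hF n).norm.pow 2)).aestronglyMeasurable hK.measurableSet)
    ?_ (integrableOn_const hK.measure_lt_top.ne) ?_
  · filter_upwards [hFC] with n hn
    refine (ae_restrict_iff' hK.measurableSet).2 (.of_forall fun x hx ↦ ?_)
    rw [norm_mul, norm_pow, norm_norm]
    exact mul_le_mul (hG x hx) (pow_le_pow_left₀ (norm_nonneg _) (hn x hx) 2) (by positivity)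
      ((norm_nonneg _).trans (hG x hx))
  · exact (ae_restrict_iff' hK.measurableSet).2
      (.of_forall fun x hx ↦ ((h.tendsto_at hx).norm.pow 2).const_mul _)

theorem setIntegral_closedBall_eq_setIntegral_polarCoord {E : Type*} [NormedAddCommGroup E]
    [NormedSpace ℝ E] (F : ℂ → E) (R : ℝ) :
    ∫ ζ in closedBall (0 : ℂ) R, F ζ =
      ∫ p in Ioc 0 R ×ˢ Ioo (-π) π, p.1 • F (Complex.polarCoord.symm p) := by
  have hS : MeasurableSet (Ioc 0 R ×ˢ Ioo (-π) π) := measurableSet_Ioc.prod measurableSet_Ioo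
  have hST : Ioc 0 R ×ˢ Ioo (-π) π ⊆ Complex.polarCoord.target :=
    prod_mono Ioc_subset_Ioi_self subset_rfl
  rw [← integral_indicator measurableSet_closedBall, ← Complex.integral_comp_polarCoord_symm,
    ← inter_eq_self_of_subset_right hST, ← setIntegral_indicator hS]
  refine setIntegral_congr_fun Complex.polarCoord.open_target.measurableSet ?_
  rintro ⟨r, θ⟩ ⟨hr, hθ⟩
  replace hr : 0 < r := hr
  have hmem : Complex.polarCoord.symm (r, θ) ∈ closedBall 0 R ↔
      (r, θ) ∈ Ioc 0 R ×ˢ Ioo (-π) π := by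
    simp [abs_of_pos hr, hr, hθ]
  by_cases h : (r, θ) ∈ Ioc 0 R ×ˢ Ioo (-π) π
  · simp only [indicator_of_mem h, indicator_of_mem (hmem.2 h)]
  · simp only [indicator_of_notMem h, indicator_of_notMem (mt hmem.1 h), smul_zero]

theorem integral_exp_int_mul_mul_I (d : ℤ) :
    ∫ θ in Ioo (-π) π, Complex.exp (d * θ * Complex.I) = if d = 0 then 2 * (π : ℂ) else 0 := by
  split_ifs with hd
  · simp [hd, two_mul, pi_pos.le]
  rw [← integral_Ioc_eq_integral_Ioo, ← intervalIntegral.integral_of_le (by linarith [pi_pos])]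
  have hc : (d : ℂ) * Complex.I ≠ 0 := by simp [hd]
  simp_rw [mul_right_comm _ _ Complex.I]
  rw [integral_exp_mul_complex hc, div_eq_zero_iff, sub_eq_zero]
  left
  have hper : (d : ℂ) * Complex.I * π = d * Complex.I * (-π) + d * (2 * π * Complex.I) := by ring
  rw [hper, Complex.exp_add, Complex.exp_int_mul_two_pi_mul_I, mul_one]
  push_cast; ring_nf

theorem setIntegral_Ioc_zero_pow {R : ℝ} (hR : 0 ≤ R) (j : ℕ) :
    ∫ r in Ioc 0 R, ((r ^ j : ℝ) : ℂ) = ((R ^ (j + 1) / (j + 1) : ℝ) : ℂ) := by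
  rw [integral_complex_ofReal, ← intervalIntegral.integral_of_le hR, integral_pow]
  simp

/-- The integral of `‖ζ‖ ^ j` over `closedBall 0 R`. -/
noncomputable def diskMoment (R : ℝ) (j : ℕ) : ℝ := 2 * π * R ^ (j + 2) / (j + 2)

theorem diskMoment_nonneg {R : ℝ} (hR : 0 ≤ R) (j : ℕ) : 0 ≤ diskMoment R j := by
  unfold diskMoment; positivity

theorem diskMoment_le {R : ℝ} (hR : 0 < R) (n k : ℕ) :
    diskMoment R (2 * n) ≤ (k + 1) / R ^ (2 * k) * diskMoment R (2 * n + 2 * k) := by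
  have hpow : R ^ (2 * n + 2 * k + 2) = R ^ (2 * k) * R ^ (2 * n + 2) := by ring
  unfold diskMoment
  rw [hpow]
  field_simp
  push_cast
  nlinarith [mul_nonneg (n.cast_nonneg : (0 : ℝ) ≤ n) (k.cast_nonneg : (0 : ℝ) ≤ k)]

theorem setIntegral_closedBall_norm_pow_mul_pow_mul_conj_pow {R : ℝ} (hR : 0 ≤ R) (w n m : ℕ) :
    ∫ ζ in closedBall (0 : ℂ) R, (‖ζ‖ : ℂ) ^ w * (ζ ^ n * conj ζ ^ m) =
      if n = m then (diskMoment R (2 * n + w) : ℂ) else 0 := by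
  have hpolar : ∀ p ∈ Ioc 0 R ×ˢ Ioo (-π) π,
      p.1 • ((‖Complex.polarCoord.symm p‖ : ℂ) ^ w *
        (Complex.polarCoord.symm p ^ n * conj (Complex.polarCoord.symm p) ^ m)) =
      ((p.1 ^ (n + m + w + 1) : ℝ) : ℂ) * Complex.exp (((n : ℤ) - m : ℤ) * p.2 * Complex.I) := by
    rintro ⟨r, θ⟩ ⟨⟨hr, -⟩, -⟩
    have hsymm : Complex.polarCoord.symm (r, θ) = r * Complex.exp (θ * Complex.I) := by
      rw [Complex.polarCoord_symm_apply, Complex.exp_mul_I]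
      push_cast; ring
    have hexp : (((n : ℤ) - m : ℤ) : ℂ) * θ * Complex.I =
        n * (θ * Complex.I) + m * (θ * conj Complex.I) := by
      push_cast
      rw [Complex.conj_I]
      ring
    simp only [hsymm, norm_mul, Complex.norm_real, Complex.norm_exp_ofReal_mul_I,
      Real.norm_of_nonneg hr.le, mul_one, map_mul, Complex.conj_ofReal, ← Complex.exp_conj,
      mul_pow, ← Complex.exp_nat_mul, Complex.real_smul, hexp, Complex.exp_add]
    push_cast
    ring
  rw [setIntegral_closedBall_eq_setIntegral_polarCoord,
    setIntegral_congr_fun (measurableSet_Ioc.prod measurableSet_Ioo) hpolar,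
    Measure.volume_eq_prod, ← Measure.prod_restrict]
  refine (integral_prod_mul (fun r : ℝ ↦ ((r ^ (n + m + w + 1) : ℝ) : ℂ))
    (fun θ : ℝ ↦ Complex.exp (((n : ℤ) - m : ℤ) * θ * Complex.I))).trans ?_
  rw [integral_exp_int_mul_mul_I, setIntegral_Ioc_zero_pow hR]
  obtain rfl | hnm := eq_or_ne n m
  · simp only [sub_self, if_true, diskMoment]
    push_cast
    ring_nf
  · simp [hnm, sub_eq_zero]

theorem setIntegral_closedBall_norm_pow_mul_norm_sum_sq {R : ℝ} (hR : 0 ≤ R) (w : ℕ)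
    (a : ℕ → ℂ) (s : Finset ℕ) :
    ∫ ζ in closedBall (0 : ℂ) R, ‖ζ‖ ^ w * ‖∑ n ∈ s, a n * ζ ^ n‖ ^ 2 =
      ∑ n ∈ s, ‖a n‖ ^ 2 * diskMoment R (2 * n + w) := by
  have hexpand : ∀ ζ : ℂ, ((‖ζ‖ ^ w * ‖∑ n ∈ s, a n * ζ ^ n‖ ^ 2 : ℝ) : ℂ) =
      ∑ n ∈ s, ∑ m ∈ s, a n * conj (a m) * ((‖ζ‖ : ℂ) ^ w * (ζ ^ n * conj ζ ^ m)) := by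
    intro ζ
    push_cast
    rw [← Complex.mul_conj', map_sum, Finset.sum_mul_sum, Finset.mul_sum]
    simp_rw [Finset.mul_sum]
    refine Finset.sum_congr rfl fun n _ ↦ Finset.sum_congr rfl fun m _ ↦ ?_
    simp only [map_mul, map_pow]
    ring
  have hint : ∀ n m, Integrable
      (fun ζ : ℂ ↦ a n * conj (a m) * ((‖ζ‖ : ℂ) ^ w * (ζ ^ n * conj ζ ^ m)))
      (volume.restrict (closedBall 0 R)) := fun n m ↦
    (Continuous.continuousOn (by fun_prop)).integrableOn_compact (isCompact_closedBall 0 R)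
  apply Complex.ofReal_injective
  rw [← integral_complex_ofReal]
  simp_rw [hexpand]
  rw [integral_finsetSum _ fun n _ ↦ integrable_finsetSum _ fun m _ ↦ hint n m]
  push_cast
  refine Finset.sum_congr rfl fun n hn ↦ ?_
  rw [integral_finsetSum _ fun m _ ↦ hint n m]
  simp_rw [integral_const_mul, setIntegral_closedBall_norm_pow_mul_pow_mul_conj_pow hR, mul_ite,
    mul_zero, Finset.sum_ite_eq, if_pos hn, Complex.mul_conj']

theorem hasSum_setIntegral_closedBall_norm_pow_mul_norm_sq {R : ℝ} (hR : 0 ≤ R) (w : ℕ)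
    {a : ℕ → ℂ} {f : ℂ → ℂ}
    (hf : TendstoUniformlyOn (fun N ζ ↦ ∑ n ∈ Finset.range N, a n * ζ ^ n) f atTop
      (closedBall 0 R)) :
    HasSum (fun n ↦ ‖a n‖ ^ 2 * diskMoment R (2 * n + w))
      (∫ ζ in closedBall (0 : ℂ) R, ‖ζ‖ ^ w * ‖f ζ‖ ^ 2) := by
  rw [hasSum_iff_tendsto_nat_of_nonneg fun n ↦ mul_nonneg (by positivity) (diskMoment_nonneg hR _)]
  simp_rw [← setIntegral_closedBall_norm_pow_mul_norm_sum_sq hR]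
  exact hf.tendsto_setIntegral_mul_norm_sq (isCompact_closedBall 0 R) (by fun_prop)
    fun N ↦ (by fun_prop)

theorem exists_tendstoUniformlyOn_closedBall_sum_mul_pow {f : ℂ → ℂ} {U : Set ℂ} (hU : IsOpen U)
    {R : ℝ} (hR : 0 ≤ R) (hRU : closedBall 0 R ⊆ U) (hf : DifferentiableOn ℂ f U) :
    ∃ a : ℕ → ℂ, TendstoUniformlyOn (fun N ζ ↦ ∑ n ∈ Finset.range N, a n * ζ ^ n) f atTop
      (closedBall 0 R) := by
  obtain ⟨δ, hδ, hδU⟩ := (isCompact_closedBall (0 : ℂ) R).exists_thickening_subset_open hU hRU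
  rw [thickening_closedBall hδ hR] at hδU
  let r : NNReal := ⟨R + δ / 2, by positivity⟩
  let r' : NNReal := ⟨R + δ / 4, by positivity⟩
  have hps : HasFPowerSeriesOnBall f (cauchyPowerSeries f 0 r) 0 r := by
    refine (hf.mono ((closedBall_subset_ball ?_).trans hδU)).hasFPowerSeriesOnBall ?_
    · change R + δ / 2 < δ + R; linarith
    · change (0 : ℝ) < R + δ / 2; positivity
  refine ⟨(cauchyPowerSeries f 0 r).coeff, ?_⟩
  have hr' : (r' : ENNReal) < r := by
    rw [ENNReal.coe_lt_coe, ← NNReal.coe_lt_coe]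
    change R + δ / 4 < R + δ / 2; linarith
  refine ((hps.tendstoUniformlyOn' hr').mono (closedBall_subset_ball ?_)).congr
    (.of_forall fun N ζ _ ↦ ?_)
  · change R < R + δ / 4; linarith
  · simp [FormalMultilinearSeries.partialSum, mul_comm]

theorem setIntegral_closedBall_norm_sq_le {f : ℂ → ℂ} {U : Set ℂ} (hU : IsOpen U) {R : ℝ}
    (hR : 0 < R) (hRU : closedBall 0 R ⊆ U) (hf : DifferentiableOn ℂ f U) (k : ℕ) :
    ∫ ζ in closedBall (0 : ℂ) R, ‖f ζ‖ ^ 2 ≤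
      (k + 1) / R ^ (2 * k) * ∫ ζ in closedBall (0 : ℂ) R, ‖ζ‖ ^ (2 * k) * ‖f ζ‖ ^ 2 := by
  obtain ⟨a, ha⟩ := exists_tendstoUniformlyOn_closedBall_sum_mul_pow hU hR.le hRU hf
  have h0 := hasSum_setIntegral_closedBall_norm_pow_mul_norm_sq hR.le 0 ha
  simp only [pow_zero, one_mul, add_zero] at h0
  have h2k := (hasSum_setIntegral_closedBall_norm_pow_mul_norm_sq hR.le (2 * k) ha).mul_left
    ((k + 1) / R ^ (2 * k))
  refine hasSum_le (fun n ↦ ?_) h0 h2k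
  rw [mul_left_comm]
  exact mul_le_mul_of_nonneg_left (diskMoment_le hR n k) (sq_nonneg _)

/-- For `f` holomorphic on a neighborhood of the closed disk of radius 2 and `k ≥ 0`,
`∫_{Δ(0,2)} |f|² dm ≤ ((k+1)/2^{2k}) ∫_{Δ(0,2)} |ζ|^{2k} |f|² dm`. -/
theorem integral_sq_le_integral_pow_mul_sq
    (f : ℂ → ℂ) (k : ℕ) (U : Set ℂ) (hU : IsOpen U)
    (hball : closedBall (0 : ℂ) 2 ⊆ U) (hf : DifferentiableOn ℂ f U) :
    ∫ ζ in closedBall (0 : ℂ) 2, ‖f ζ‖ ^ 2 ≤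
      ((k + 1 : ℝ) / 2 ^ (2 * k)) *
        ∫ ζ in closedBall (0 : ℂ) 2, ‖ζ‖ ^ (2 * k) * ‖f ζ‖ ^ 2 :=
  setIntegral_closedBall_norm_sq_le hU two_pos hball hf k
end

section
/- Let n ≥ 1 and let k ≥ 0 be an integer. Let s and s̃ be holomorphic functions on an open neighborhood of the closed polydisk Δⁿ(0,2) = {z ∈ ℂⁿ : |z_ℓ| ≤ 2 for ℓ = 1,…,n} such that s(z) = z₁^k · s̃(z) for all z. Then for every point x in the closed polydisk Δⁿ(0,1) one has |s(x)|² ≤ ((k+1)/2^{2k}) |x₁|^{2k} ∫_{Δⁿ(0,2)} |s(z)|² dm(z). -/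
/-!
For `|x| ≤ 1` and `3/2 ≤ r ≤ 2`, Cauchy's formula for `g²` on the circle `|ζ| = r` gives
`|g(x)|² ≤ 3 ⨍_{|ζ| = r} |g|²`. Multiplying by `2π r^{2j+1}` and integrating over `r ∈ [3/2, 2]`
in polar coordinates yields `|g(x)|² ≤ (j+1)/4^j ∫_{|ζ| ≤ 2} |ζ|^{2j} |g(ζ)|²`; the factor `4^j`
comes from the outer end `r = 2` of the annulus. Fubini and induction on the number of variables
give the same estimate on the polydisk with weight `∏ |z_ℓ|^{2j_ℓ}`. Applied to `s̃` with the weight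
`|z₁|^{2k}`, the right-hand side becomes `∫ |s|²`.
-/

open MeasureTheory Metric Real Set

local notation "Δ^" n:max "(" r ")" => Set.pi Set.univ fun _ : Fin n ↦ Metric.closedBall (0 : ℂ) r

theorem norm_circleAverage_le_circleAverage_norm {E : Type*} [NormedAddCommGroup E]
    [NormedSpace ℝ E] (f : ℂ → E) (c : ℂ) (R : ℝ) :
    ‖circleAverage f c R‖ ≤ circleAverage (fun z ↦ ‖f z‖) c R := by
  rw [circleAverage, circleAverage, norm_smul, smul_eq_mul, Real.norm_of_nonneg (by positivity)]
  gcongr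
  exact intervalIntegral.norm_integral_le_integral_norm two_pi_pos.le

theorem circleAverage_norm_pow_mul (m : ℕ) (f : ℂ → ℝ) (r : ℝ) :
    circleAverage (fun z ↦ ‖z‖ ^ m * f z) 0 r = |r| ^ m * circleAverage f 0 r := by
  rw [← smul_eq_mul, ← circleAverage_fun_smul]
  refine circleAverage_congr_sphere fun z hz ↦ ?_
  rw [smul_eq_mul, ← mem_sphere_zero_iff_norm.1 hz]

theorem DiffContOnCl.norm_le_div_mul_circleAverage_norm {E : Type*} [NormedAddCommGroup E]
    [NormedSpace ℂ E] [CompleteSpace E] {f : ℂ → E} {c w : ℂ} {R : ℝ}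
    (hf : DiffContOnCl ℂ f (ball c R)) (hw : w ∈ ball c R) :
    ‖f w‖ ≤ R / (R - ‖w - c‖) * Real.circleAverage (fun z ↦ ‖f z‖) c R := by
  have hR : 0 < R := pos_of_mem_ball hw
  have hwR : 0 < R - ‖w - c‖ := sub_pos.2 (mem_ball_iff_norm.1 hw)
  rw [← abs_of_pos hR] at hf hw
  have hfc : ContinuousOn f (sphere c |R|) :=
    hf.continuousOn.mono (sphere_subset_closedBall.trans (closure_ball c (by positivity)).superset)
  have hgap : ∀ z ∈ sphere c |R|, R - ‖w - c‖ ≤ ‖z - w‖ := fun z hz ↦ by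
    simpa [mem_sphere_iff_norm.1 hz, abs_of_pos hR] using norm_sub_norm_le (z - c) (w - c)
  have hkernel : ContinuousOn (fun z ↦ (z - c) / (z - w)) (sphere c |R|) :=
    (continuousOn_id.sub continuousOn_const).div (continuousOn_id.sub continuousOn_const)
      fun z hz ↦ norm_pos_iff.1 (hwR.trans_le (hgap z hz))
  calc ‖f w‖ = ‖Real.circleAverage (fun z ↦ ((z - c) / (z - w)) • f z) c R‖ := by
        rw [hf.circleAverage_smul_div hw]
    _ ≤ Real.circleAverage (fun z ↦ ‖((z - c) / (z - w)) • f z‖) c R :=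
        norm_circleAverage_le_circleAverage_norm _ _ _
    _ ≤ Real.circleAverage (fun z ↦ R / (R - ‖w - c‖) * ‖f z‖) c R := by
        refine circleAverage_mono (hkernel.smul hfc).norm.circleIntegrable'
          (continuousOn_const.mul hfc.norm).circleIntegrable' fun z hz ↦ ?_
        rw [norm_smul, norm_div, mem_sphere_iff_norm.1 hz, abs_of_pos hR]
        gcongr
        exact hgap z hz
    _ = R / (R - ‖w - c‖) * Real.circleAverage (fun z ↦ ‖f z‖) c R :=
        circleAverage_fun_smul (𝕜 := ℝ)

theorem two_pi_smul_circleAverage_eq {E : Type*} [NormedAddCommGroup E] [NormedSpace ℝ E]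
    (f : ℂ → E) (c : ℂ) (R : ℝ) :
    (2 * π) • circleAverage f c R = ∫ θ in -π..π, f (circleMap c R θ) := by
  rw [circleAverage_eq_integral_add (-π), smul_inv_smul₀ two_pi_pos.ne',
    intervalIntegral.integral_comp_add_right (fun θ ↦ f (circleMap c R θ))]
  ring_nf

theorem setIntegral_preimage_norm_Icc_eq_intervalIntegral {E : Type*} [NormedAddCommGroup E]
    [NormedSpace ℝ E] {f : ℂ → E} {a b : ℝ} (ha : 0 < a) (hab : a ≤ b)
    (hf : ContinuousOn f (closedBall 0 b)) :
    ∫ z in norm ⁻¹' Icc a b, f z = ∫ r in a..b, (2 * π * r) • circleAverage f 0 r := by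
  set F : ℝ × ℝ → E := fun p ↦ p.1 • f (circleMap 0 p.1 p.2)
  have hpolar : ∀ p ∈ polarCoord.target, p.1 • (norm ⁻¹' Icc a b).indicator f
      (Complex.polarCoord.symm p) = (Icc a b ×ˢ univ).indicator F p := by
    rintro ⟨r, θ⟩ ⟨hr, -⟩
    have hsymm : Complex.polarCoord.symm (r, θ) = circleMap 0 r θ := by
      simp [Complex.polarCoord_symm_apply, circleMap, Complex.exp_mul_I]
    have hnorm : ‖circleMap 0 r θ‖ = r := by simp [abs_of_pos (show 0 < r from hr)]
    by_cases hrab : r ∈ Icc a b <;> simp [hsymm, hnorm, hrab, F]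
  have hrect : polarCoord.target ∩ Icc a b ×ˢ univ = Icc a b ×ˢ Ioo (-π) π := by
    rw [polarCoord_target, prod_inter_prod, inter_univ,
      inter_eq_right.2 (Icc_subset_Ioi_iff hab |>.2 ha)]
  have hFint : IntegrableOn F (Icc a b ×ˢ Ioo (-π) π) := by
    refine (ContinuousOn.integrableOn_compact (isCompact_Icc.prod isCompact_Icc) ?_).mono_set
      (prod_mono subset_rfl Ioo_subset_Icc_self)
    refine continuousOn_fst.smul (hf.comp (by fun_prop) fun p hp ↦ ?_)
    simpa [abs_of_pos (ha.trans_le hp.1.1)] using hp.1.2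
  calc ∫ z in norm ⁻¹' Icc a b, f z
      = ∫ p in polarCoord.target, (Icc a b ×ˢ univ).indicator F p := by
        rw [← integral_indicator (measurableSet_Icc.preimage continuous_norm.measurable),
          ← Complex.integral_comp_polarCoord_symm]
        exact setIntegral_congr_fun polarCoord.open_target.measurableSet hpolar
    _ = ∫ r in Icc a b, ∫ θ in Ioo (-π) π, F (r, θ) := by
        rw [setIntegral_indicator (measurableSet_Icc.prod MeasurableSet.univ), hrect,
          Measure.volume_eq_prod, setIntegral_prod F hFint]
    _ = ∫ r in a..b, (2 * π * r) • circleAverage f 0 r := by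
        rw [intervalIntegral.integral_of_le hab, integral_Icc_eq_integral_Ioc]
        refine setIntegral_congr_fun measurableSet_Ioc fun r _ ↦ ?_
        rw [mul_comm, mul_smul, two_pi_smul_circleAverage_eq, integral_smul,
          intervalIntegral.integral_of_le (neg_le_self pi_pos.le), integral_Ioc_eq_integral_Ioo]

theorem sq_norm_le_three_mul_circleAverage {g : ℂ → ℂ} (hg : DiffContOnCl ℂ g (ball 0 2))
    {x : ℂ} (hx : ‖x‖ ≤ 1) {r : ℝ} (hr : r ∈ Icc (3 / 2) 2) :
    ‖g x‖ ^ 2 ≤ 3 * circleAverage (fun z ↦ ‖g z‖ ^ 2) 0 r := by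
  have hgr : DiffContOnCl ℂ (fun z ↦ g z ^ 2) (ball 0 r) :=
    have hg' := hg.mono (ball_subset_ball hr.2)
    ⟨hg'.differentiableOn.pow 2, hg'.continuousOn.pow 2⟩
  have hxr : x ∈ ball 0 r := mem_ball_zero_iff.2 (by linarith [hr.1])
  have hkernel : r / (r - ‖x‖) ≤ 3 := by
    rw [div_le_iff₀ (by linarith [hr.1])]
    linarith [hr.1]
  have havg : 0 ≤ circleAverage (fun z ↦ ‖g z‖ ^ 2) 0 r :=
    circleAverage_nonneg_of_nonneg fun z _ ↦ by positivity
  calc ‖g x‖ ^ 2 = ‖g x ^ 2‖ := (norm_pow _ _).symm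
    _ ≤ r / (r - ‖x - 0‖) * circleAverage (fun z ↦ ‖g z ^ 2‖) 0 r :=
        hgr.norm_le_div_mul_circleAverage_norm hxr
    _ ≤ 3 * circleAverage (fun z ↦ ‖g z‖ ^ 2) 0 r := by
        simp only [sub_zero, norm_pow]
        gcongr

theorem four_pow_div_le_integral_pow (j : ℕ) :
    (4 : ℝ) ^ j / (j + 1) ≤ 2 * π / 3 * ∫ r in (3 / 2 : ℝ)..2, r ^ (2 * j + 1) := by
  have hpow : (3 / 2 : ℝ) ^ (2 * j + 2) ≤ 9 / 4 * 4 ^ j :=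
    calc (3 / 2 : ℝ) ^ (2 * j + 2) = 9 / 4 * (9 / 4) ^ j := by rw [pow_add, pow_mul]; norm_num; ring
      _ ≤ 9 / 4 * 4 ^ j := by gcongr; norm_num
  have hint : 7 / 8 * (4 ^ j / (j + 1)) ≤ ∫ r in (3 / 2 : ℝ)..2, r ^ (2 * j + 1) := by
    rw [integral_pow, show 2 * j + 1 + 1 = 2 * j + 2 by ring,
      show (2 : ℝ) ^ (2 * j + 2) = 4 * 4 ^ j by rw [pow_add, pow_mul]; norm_num; ring]
    rw [mul_div_assoc', div_le_div_iff₀ (by positivity) (by positivity)]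
    push_cast
    nlinarith [pow_pos (by norm_num : (0 : ℝ) < 4) j]
  calc (4 : ℝ) ^ j / (j + 1) ≤ (2 * π / 3 * (7 / 8)) * (4 ^ j / (j + 1)) :=
        le_mul_of_one_le_left (by positivity) (by linarith [pi_gt_three])
    _ ≤ _ := by rw [mul_assoc]; gcongr

theorem sq_norm_le_mul_setIntegral_closedBall {g : ℂ → ℂ} (hg : DiffContOnCl ℂ g (ball 0 2))
    (j : ℕ) {x : ℂ} (hx : ‖x‖ ≤ 1) :
    ‖g x‖ ^ 2 ≤ (j + 1) / 4 ^ j * ∫ z in closedBall (0 : ℂ) 2, ‖z‖ ^ (2 * j) * ‖g z‖ ^ 2 := by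
  set w : ℂ → ℝ := fun z ↦ ‖z‖ ^ (2 * j) * ‖g z‖ ^ 2
  have hwc : ContinuousOn w (closedBall 0 2) := by
    have := hg.continuousOn
    rw [closure_ball _ two_ne_zero] at this
    fun_prop
  have hcirc : ∀ r ∈ Icc (3 / 2 : ℝ) 2,
      (2 * π * r) * (r ^ (2 * j) * (‖g x‖ ^ 2 / 3)) ≤ (2 * π * r) • circleAverage w 0 r := by
    intro r hr
    have hr0 : 0 ≤ r := by linarith [hr.1]
    have := sq_norm_le_three_mul_circleAverage hg hx hr
    rw [smul_eq_mul, circleAverage_norm_pow_mul, abs_of_nonneg hr0]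
    gcongr
    linarith
  have hint : IntervalIntegrable (fun r ↦ (2 * π * r) • circleAverage w 0 r) volume (3 / 2) 2 := by
    refine ContinuousOn.intervalIntegrable_of_Icc (by norm_num) ?_
    refine (continuousOn_const.mul continuousOn_id).smul (hwc.mono ?_ |>.circleAverage ?_)
    · exact fun z hz ↦ by simpa using hz.2
    · exact fun r hr ↦ by linarith [hr.1]
  have hw0 : 0 ≤ᵐ[volume.restrict (closedBall (0 : ℂ) 2)] w := ae_of_all _ fun z ↦ by positivity
  calc ‖g x‖ ^ 2 = (j + 1) / 4 ^ j * (4 ^ j / (j + 1) * ‖g x‖ ^ 2) := by field_simp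
    _ ≤ (j + 1) / 4 ^ j * (2 * π / 3 * (∫ r in (3 / 2 : ℝ)..2, r ^ (2 * j + 1)) * ‖g x‖ ^ 2) := by
        gcongr
        exact four_pow_div_le_integral_pow j
    _ = (j + 1) / 4 ^ j * ∫ r in (3 / 2 : ℝ)..2, (2 * π * r) * (r ^ (2 * j) * (‖g x‖ ^ 2 / 3)) := by
        rw [← intervalIntegral.integral_const_mul, ← intervalIntegral.integral_mul_const]
        congr 1
        exact intervalIntegral.integral_congr fun r _ ↦ by ring
    _ ≤ (j + 1) / 4 ^ j * ∫ r in (3 / 2 : ℝ)..2, (2 * π * r) • circleAverage w 0 r := by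
        gcongr
        exact intervalIntegral.integral_mono_on (by norm_num)
          (Continuous.intervalIntegrable (by fun_prop) _ _) hint hcirc
    _ = (j + 1) / 4 ^ j * ∫ z in norm ⁻¹' Icc (3 / 2) 2, w z := by
        rw [setIntegral_preimage_norm_Icc_eq_intervalIntegral (by norm_num) (by norm_num) hwc]
    _ ≤ (j + 1) / 4 ^ j * ∫ z in closedBall (0 : ℂ) 2, w z := by
        refine mul_le_mul_of_nonneg_left ?_ (by positivity)
        refine setIntegral_mono_set (hwc.integrableOn_compact (isCompact_closedBall _ _)) hw0 ?_
        exact ae_of_all _ fun z hz ↦ mem_closedBall_zero_iff.2 hz.2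

theorem Fin.cons_mem_univ_pi {n : ℕ} {α : Type*} {s : Fin (n + 1) → Set α} {a : α}
    {z : Fin n → α} :
    (Fin.cons a z : Fin (n + 1) → α) ∈ univ.pi s ↔ a ∈ s 0 ∧ z ∈ univ.pi fun i ↦ s i.succ := by
  simp [Fin.forall_fin_succ]

theorem Fin.preimage_cons_univ_pi {n : ℕ} {α : Type*} {s : Fin (n + 1) → Set α} :
    (fun p : α × (Fin n → α) ↦ (Fin.cons p.1 p.2 : Fin (n + 1) → α)) ⁻¹' univ.pi s =
      s 0 ×ˢ univ.pi fun i ↦ s i.succ := by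
  ext ⟨a, z⟩
  exact Fin.cons_mem_univ_pi

theorem MeasurableEquiv.coe_piFinSuccAbove_zero_symm {n : ℕ} {α : Type*} [MeasurableSpace α] :
    ⇑(MeasurableEquiv.piFinSuccAbove (fun _ : Fin (n + 1) ↦ α) 0).symm =
      fun p ↦ Fin.cons p.1 p.2 := by
  ext p : 1
  simp [MeasurableEquiv.piFinSuccAbove_symm_apply, Fin.insertNthEquiv, Fin.insertNth_zero']

section PiFinSucc

variable {n : ℕ} {α E : Type*} [MeasureSpace α] [SigmaFinite (volume : Measure α)]
  [NormedAddCommGroup E] {s : Fin (n + 1) → Set α} {f : (Fin (n + 1) → α) → E}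

theorem integrableOn_comp_fin_cons (hf : IntegrableOn f (univ.pi s)) :
    IntegrableOn (fun p : α × (Fin n → α) ↦ f (Fin.cons p.1 p.2))
      (s 0 ×ˢ univ.pi fun i ↦ s i.succ) := by
  have e := (volume_preserving_piFinSuccAbove (fun _ : Fin (n + 1) ↦ α) 0).symm
  rwa [← e.integrableOn_comp_preimage (MeasurableEquiv.measurableEmbedding _),
    MeasurableEquiv.coe_piFinSuccAbove_zero_symm, Fin.preimage_cons_univ_pi] at hf

variable [NormedSpace ℝ E]

theorem integrableOn_setIntegral_fin_cons (hf : IntegrableOn f (univ.pi s)) :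
    IntegrableOn (fun a ↦ ∫ z in univ.pi (fun i ↦ s i.succ), f (Fin.cons a z)) (s 0) := by
  have hprod := integrableOn_comp_fin_cons hf
  rw [IntegrableOn, Measure.volume_eq_prod, ← Measure.prod_restrict] at hprod
  exact hprod.integral_prod_left

theorem setIntegral_univ_pi_fin_succ (hf : IntegrableOn f (univ.pi s)) :
    ∫ z in univ.pi s, f z = ∫ a in s 0, ∫ z in univ.pi (fun i ↦ s i.succ), f (Fin.cons a z) := by
  have e := (volume_preserving_piFinSuccAbove (fun _ : Fin (n + 1) ↦ α) 0).symm
  rw [← e.setIntegral_preimage_emb (MeasurableEquiv.measurableEmbedding _),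
    MeasurableEquiv.coe_piFinSuccAbove_zero_symm, Fin.preimage_cons_univ_pi,
    Measure.volume_eq_prod, setIntegral_prod _ (integrableOn_comp_fin_cons hf)]

end PiFinSucc

section FinCons

variable {𝕜 E : Type*} [NontriviallyNormedField 𝕜] [NormedAddCommGroup E] [NormedSpace 𝕜 E]
  {n : ℕ}

theorem differentiable_fin_cons_left (z : Fin n → E) :
    Differentiable 𝕜 fun a : E ↦ (Fin.cons a z : Fin (n + 1) → E) :=
  differentiable_pi.2 fun i ↦ Fin.cases (by simp)
    (fun i ↦ by simp) i

theorem differentiable_fin_cons_right (a : E) :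
    Differentiable 𝕜 fun z : Fin n → E ↦ (Fin.cons a z : Fin (n + 1) → E) :=
  differentiable_pi.2 fun i ↦ Fin.cases (by simp)
    (fun i ↦ by simpa using differentiable_apply i) i

end FinCons

theorem sq_norm_fin_cons_le {n : ℕ} {h : (Fin (n + 1) → ℂ) → ℂ}
    (hh : ∀ z ∈ Δ^(n + 1)(2), DifferentiableAt ℂ h z) (m : ℕ) {a : ℂ} (ha : ‖a‖ ≤ 1)
    {z : Fin n → ℂ} (hz : z ∈ Δ^n(2)) :
    ‖h (Fin.cons a z)‖ ^ 2 ≤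
      (m + 1) / 4 ^ m * ∫ ζ in closedBall (0 : ℂ) 2, ‖ζ‖ ^ (2 * m) * ‖h (Fin.cons ζ z)‖ ^ 2 := by
  have hslice : DifferentiableOn ℂ (fun ζ ↦ h (Fin.cons ζ z)) (closure (ball 0 2)) := by
    rw [closure_ball _ two_ne_zero]
    exact fun ζ hζ ↦ ((hh _ (Fin.cons_mem_univ_pi.2 ⟨hζ, hz⟩)).comp ζ
      (differentiable_fin_cons_left z ζ)).differentiableWithinAt
  exact sq_norm_le_mul_setIntegral_closedBall hslice.diffContOnCl m ha

theorem sq_norm_le_prod_mul_setIntegral_polydisk {n : ℕ} {h : (Fin n → ℂ) → ℂ}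
    (hh : ∀ z ∈ Δ^n(2), DifferentiableAt ℂ h z) (j : Fin n → ℕ) {x : Fin n → ℂ}
    (hx : x ∈ Δ^n(1)) :
    ‖h x‖ ^ 2 ≤ (∏ ℓ, ((j ℓ + 1 : ℝ) / 4 ^ j ℓ)) *
      ∫ z in Δ^n(2), (∏ ℓ, ‖z ℓ‖ ^ (2 * j ℓ)) * ‖h z‖ ^ 2 := by
  induction n with
  | zero =>
    rw [eq_univ_of_forall fun z ↦ mem_univ_pi.2 fun i ↦ i.elim0, Measure.restrict_univ, volume_pi,
      Measure.pi_of_empty (x := x), integral_dirac]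
    simp
  | succ n ih =>
    obtain ⟨a, x', rfl⟩ : ∃ a x', x = Fin.cons a x' :=
      ⟨x 0, Fin.tail x, (Fin.cons_self_tail x).symm⟩
    obtain ⟨ha, hx'⟩ := Fin.cons_mem_univ_pi.1 hx
    set W : (Fin (n + 1) → ℂ) → ℝ := fun z ↦ (∏ ℓ, ‖z ℓ‖ ^ (2 * j ℓ)) * ‖h z‖ ^ 2
    set C : ℝ := ∏ i : Fin n, ((j i.succ + 1 : ℝ) / 4 ^ j i.succ)
    have hWint : IntegrableOn W Δ^(n + 1)(2) := by
      have hc : ContinuousOn h Δ^(n + 1)(2) := fun z hz ↦ (hh z hz).continuousAt.continuousWithinAt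
      exact ContinuousOn.integrableOn_compact (isCompact_univ_pi fun _ ↦ isCompact_closedBall _ _)
        (by fun_prop)
    have hslice : ∀ ζ ∈ closedBall (0 : ℂ) 2,
        ‖ζ‖ ^ (2 * j 0) * ‖h (Fin.cons ζ x')‖ ^ 2 ≤ C * ∫ z' in Δ^n(2), W (Fin.cons ζ z') := by
      intro ζ hζ
      have hW (z' : Fin n → ℂ) : W (Fin.cons ζ z') =
          ‖ζ‖ ^ (2 * j 0) * ((∏ i, ‖z' i‖ ^ (2 * j i.succ)) * ‖h (Fin.cons ζ z')‖ ^ 2) := by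
        simp only [W, Fin.prod_univ_succ, Fin.cons_zero, Fin.cons_succ]
        ring
      simp only [hW, integral_const_mul, mul_left_comm C]
      refine mul_le_mul_of_nonneg_left (ih (h := fun z' ↦ h (Fin.cons ζ z')) ?_ _ hx')
        (by positivity)
      exact fun z' hz' ↦ (hh _ (Fin.cons_mem_univ_pi.2 ⟨hζ, hz'⟩)).comp z'
        (differentiable_fin_cons_right ζ z')
    have hx'₂ : x' ∈ Δ^n(2) := fun i _ ↦ closedBall_subset_closedBall one_le_two (hx' i trivial)
    calc ‖h (Fin.cons a x')‖ ^ 2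
        ≤ (j 0 + 1) / 4 ^ j 0 *
            ∫ ζ in closedBall (0 : ℂ) 2, ‖ζ‖ ^ (2 * j 0) * ‖h (Fin.cons ζ x')‖ ^ 2 :=
          sq_norm_fin_cons_le hh (j 0) (mem_closedBall_zero_iff.1 ha) hx'₂
      _ ≤ (j 0 + 1) / 4 ^ j 0 *
            ∫ ζ in closedBall (0 : ℂ) 2, C * ∫ z' in Δ^n(2), W (Fin.cons ζ z') :=
          mul_le_mul_of_nonneg_left (integral_mono_of_nonneg (ae_of_all _ fun ζ ↦ by positivity)
            ((integrableOn_setIntegral_fin_cons hWint).const_mul C)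
            ((ae_restrict_iff' measurableSet_closedBall).2 (ae_of_all _ hslice))) (by positivity)
      _ = _ := by
          rw [integral_const_mul, ← setIntegral_univ_pi_fin_succ hWint, Fin.prod_univ_succ]
          ring

theorem pointwise_sq_le_of_factor_general
    (n : ℕ) (hn : 1 ≤ n) (k : ℕ)
    (s st : (Fin n → ℂ) → ℂ) (U : Set (Fin n → ℂ)) (hU : IsOpen U)
    (hP : {z : Fin n → ℂ | ∀ ℓ, ‖z ℓ‖ ≤ 2} ⊆ U)
    (hst : DifferentiableOn ℂ st U)
    (heq : ∀ z : Fin n → ℂ, s z = (z ⟨0, hn⟩) ^ k * st z) :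
    ∀ x : Fin n → ℂ, (∀ ℓ, ‖x ℓ‖ ≤ 1) →
      ‖s x‖ ^ 2 ≤
        ((k + 1 : ℝ) / 2 ^ (2 * k)) * ‖x ⟨0, hn⟩‖ ^ (2 * k) *
          ∫ z in {z : Fin n → ℂ | ∀ ℓ, ‖z ℓ‖ ≤ 2}, ‖s z‖ ^ 2 := by
  intro x hx
  set i₀ : Fin n := ⟨0, hn⟩
  set j : Fin n → ℕ := Pi.single i₀ k
  have hpolydisk (r : ℝ) : {z : Fin n → ℂ | ∀ ℓ, ‖z ℓ‖ ≤ r} = Δ^n(r) := by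
    ext z
    simp
  have hconst : ∏ ℓ, ((j ℓ + 1 : ℝ) / 4 ^ j ℓ) = (k + 1) / 4 ^ k :=
    (Fintype.prod_eq_single i₀ fun ℓ hℓ ↦ by simp [j, hℓ]).trans (by simp [j])
  have hweight (z : Fin n → ℂ) : ∏ ℓ, ‖z ℓ‖ ^ (2 * j ℓ) = ‖z i₀‖ ^ (2 * k) :=
    (Fintype.prod_eq_single i₀ fun ℓ hℓ ↦ by simp [j, hℓ]).trans (by simp [j])
  have hnorm (z : Fin n → ℂ) : ‖z i₀‖ ^ (2 * k) * ‖st z‖ ^ 2 = ‖s z‖ ^ 2 := by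
    rw [heq, norm_mul, mul_pow, norm_pow, ← pow_mul, mul_comm k]
  have key := sq_norm_le_prod_mul_setIntegral_polydisk (h := st)
    (fun z hz ↦ hst.differentiableAt (hU.mem_nhds (hP (by rwa [hpolydisk])))) j
    (x := x) (by rwa [← hpolydisk])
  simp only [hconst, hweight] at key
  rw [funext hnorm] at key
  rw [← hnorm, hpolydisk, show (2 : ℝ) ^ (2 * k) = 4 ^ k by rw [pow_mul]; norm_num]
  calc ‖x i₀‖ ^ (2 * k) * ‖st x‖ ^ 2
      ≤ ‖x i₀‖ ^ (2 * k) * ((k + 1) / 4 ^ k * ∫ z in Δ^n(2), ‖s z‖ ^ 2) :=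
        mul_le_mul_of_nonneg_left key (by positivity)
    _ = _ := by ring

/-- If `s, s̃` are holomorphic on a neighborhood of the closed polydisk `Δⁿ(0,2)` and
`s(z) = z₁^k s̃(z)`, then for every `x ∈ Δⁿ(0,1)` one has
`|s(x)|² ≤ ((k+1)/2^{2k}) |x₁|^{2k} ∫_{Δⁿ(0,2)} |s|² dm`. -/
theorem pointwise_sq_le_of_factor
    (n : ℕ) (hn : 1 ≤ n) (k : ℕ)
    (s st : (Fin n → ℂ) → ℂ) (U : Set (Fin n → ℂ)) (hU : IsOpen U)
    (hP : {z : Fin n → ℂ | ∀ ℓ, ‖z ℓ‖ ≤ 2} ⊆ U)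
    (hs : DifferentiableOn ℂ s U) (hst : DifferentiableOn ℂ st U)
    (heq : ∀ z : Fin n → ℂ, s z = (z ⟨0, hn⟩) ^ k * st z) :
    ∀ x : Fin n → ℂ, (∀ ℓ, ‖x ℓ‖ ≤ 1) →
      ‖s x‖ ^ 2 ≤
        ((k + 1 : ℝ) / 2 ^ (2 * k)) * ‖x ⟨0, hn⟩‖ ^ (2 * k) *
          ∫ z in {z : Fin n → ℂ | ∀ ℓ, ‖z ℓ‖ ≤ 2}, ‖s z‖ ^ 2 :=
  pointwise_sq_le_of_factor_general n hn k s st U hU hP hst heq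
end
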